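/- arXiv:2212.01211 — 3 statements merged into one kernel-verified Lean document; each statement's English description precedes it below -/
import Mathlib

section
/- For real x_l with x_l < 10539/9974, if there exists a real x_t satisfying all three inequalities x_t ≤ (42734·x_l − 70239)/(5460·x_l − 9950), x_t ≥ (11928·x_l − 269330)/(2570·x_l − 40705), and x_t ≤ (13538·x_l − 616793)/(4220·x_l − 93450), then x_l = 3.7 − 2.2·√2 and x_t = 7.4 − 0.5·√2. -/
/-- For x_l < 10539/9974, the only solution of the three inequalities is the
irrational pair x_l = 3.7 − 2.2·√2, x_t = 7.4 − 0.5·√2. -/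
theorem unique_solution_is_irrational (xl xt : ℝ)
    (hxl : xl < 10539 / 9974)
    (h1 : xt ≤ (42734 * xl - 70239) / (5460 * xl - 9950))
    (h2 : xt ≥ (11928 * xl - 269330) / (2570 * xl - 40705))
    (h3 : xt ≤ (13538 * xl - 616793) / (4220 * xl - 93450)) :
    xl = 3.7 - 2.2 * Real.sqrt 2 ∧ xt = 7.4 - 0.5 * Real.sqrt 2 := by
  have hd1 : 5460 * xl - 9950 < 0 := by linarith
  have hd2 : 2570 * xl - 40705 < 0 := by linarith
  have hd3 : 4220 * xl - 93450 < 0 := by linarith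
  have e1 : (42734 * xl - 70239) ≤ xt * (5460 * xl - 9950) :=
    (le_div_iff_of_neg hd1).mp h1
  have e2 : xt * (2570 * xl - 40705) ≤ (11928 * xl - 269330) :=
    (div_le_iff_of_neg hd2).mp h2
  have e3 : (13538 * xl - 616793) ≤ xt * (4220 * xl - 93450) :=
    (le_div_iff_of_neg hd3).mp h3
  have A : 0 ≤ ((42734 * xl - 70239) - xt * (5460 * xl - 9950)) * (2570 * xl - 40705) :=
    mul_nonneg_of_nonpos_of_nonpos (by linarith) hd2.le
  have B : 0 ≤ (xt * (2570 * xl - 40705) - (11928 * xl - 269330)) * (5460 * xl - 9950) :=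
    mul_nonneg_of_nonpos_of_nonpos (by linarith) hd1.le
  have C : 0 ≤ ((13538 * xl - 616793) - xt * (4220 * xl - 93450)) * (2570 * xl - 40705) :=
    mul_nonneg_of_nonpos_of_nonpos (by linarith) hd2.le
  have D : 0 ≤ (xt * (2570 * xl - 40705) - (11928 * xl - 269330)) * (4220 * xl - 93450) :=
    mul_nonneg_of_nonpos_of_nonpos (by linarith) hd3.le
  have hq1 : 0 ≤ 44699500 * (xl ^ 2 - 7.4 * xl + 4.01) := by nlinarith [A, B]
  have hq2 : 0 ≤ -15543500 * (xl ^ 2 - 7.4 * xl + 4.01) := by nlinarith [C, D]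
  have key : xl ^ 2 - 7.4 * xl + 4.01 = 0 := by linarith
  set s := Real.sqrt 2 with hsdef
  have hs : s ^ 2 = 2 := Real.sq_sqrt (by norm_num)
  have hs0 : (0:ℝ) ≤ s := Real.sqrt_nonneg 2
  have hfac : (xl - (3.7 - 2.2 * s)) * (xl - (3.7 + 2.2 * s)) = 0 := by
    linear_combination key - 4.84 * hs
  have hxleq : xl = 3.7 - 2.2 * s := by
    rcases mul_eq_zero.mp hfac with h | h
    · linarith
    · exfalso; linarith
  have hsum : ((42734 * xl - 70239) - xt * (5460 * xl - 9950)) * (2570 * xl - 40705)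
      + (xt * (2570 * xl - 40705) - (11928 * xl - 269330)) * (5460 * xl - 9950) = 0 := by
    linear_combination 44699500 * key
  have hA0 : ((42734 * xl - 70239) - xt * (5460 * xl - 9950)) * (2570 * xl - 40705) = 0 := by
    linarith
  have heq1 : (42734 * xl - 70239) - xt * (5460 * xl - 9950) = 0 :=
    (mul_eq_zero.mp hA0).resolve_right hd2.ne
  have h' : (xt - (7.4 - 0.5 * s)) * (5460 * xl - 9950) = 0 := by
    rw [hxleq] at heq1 ⊢
    linear_combination -heq1 - 6006 * hs
  have hxt : xt = 7.4 - 0.5 * s := by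
    have := (mul_eq_zero.mp h').resolve_right hd1.ne
    linarith
  exact ⟨hxleq, hxt⟩
end

section
/- The points l* = (3.7 − 2.2√2, 11.7 − 2.2√2), the reflex vertex v₅ = (4, 10), and the window's end w₁ = ((293570·√2 + 8052346)/1425913, (−765670·√2 + 16485384)/1425913) are collinear. -/
/-- The guard l*, the reflex vertex v₅ = (4,10), and the window's end w₁ are
collinear. -/
theorem l_v5_w1_collinear :
    Collinear ℝ ({(3.7 - 2.2 * Real.sqrt 2, 11.7 - 2.2 * Real.sqrt 2),
      ((4 : ℝ), (10 : ℝ)),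
      ((293570 * Real.sqrt 2 + 8052346) / 1425913,
       (-765670 * Real.sqrt 2 + 16485384) / 1425913)} : Set (ℝ × ℝ)) := by
  rw [collinear_iff_exists_forall_eq_smul_vadd]
  refine ⟨((4 : ℝ), (10 : ℝ)),
    (3.7 - 2.2 * Real.sqrt 2 - 4, 11.7 - 2.2 * Real.sqrt 2 - 10), ?_⟩
  have h2 : Real.sqrt 2 ^ 2 = 2 := Real.sq_sqrt (by norm_num)
  intro p hp
  simp only [Set.mem_insert_iff, Set.mem_singleton_iff] at hp
  rcases hp with rfl | rfl | rfl
  · exact ⟨1, by simp [Prod.ext_iff]⟩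
  · exact ⟨0, by simp [Prod.ext_iff]⟩
  · refine ⟨(-61220 - 529620 * Real.sqrt 2) / 1425913, ?_⟩
    simp only [Prod.smul_mk, smul_eq_mul, vadd_eq_add, Prod.mk_add_mk, Prod.fst, Prod.snd, Prod.ext_iff]
    constructor
    · linear_combination (-1165164 / 1425913 : ℝ) * h2
    · linear_combination (-1165164 / 1425913 : ℝ) * h2
end

section
/- The points t* = (7.4 − 0.5√2, 1.7 − 0.5√2), the reflex vertex v₈ = (6, 10), and the window's end w₁ = ((293570·√2 + 8052346)/1425913, (−765670·√2 + 16485384)/1425913) are collinear. -/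
/-- The guard t*, the reflex vertex v₈ = (6,10), and the window's end w₁ are
collinear. -/
theorem t_v8_w1_collinear :
    Collinear ℝ ({(7.4 - 0.5 * Real.sqrt 2, 1.7 - 0.5 * Real.sqrt 2),
      ((6 : ℝ), (10 : ℝ)),
      ((293570 * Real.sqrt 2 + 8052346) / 1425913,
       (-765670 * Real.sqrt 2 + 16485384) / 1425913)} : Set (ℝ × ℝ)) := by
  have hs : Real.sqrt 2 ^ 2 = 2 := Real.sq_sqrt (by norm_num)
  rw [collinear_iff_exists_forall_eq_smul_vadd]
  refine ⟨((6:ℝ), (10:ℝ)),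
    (1.4 - 0.5 * Real.sqrt 2, -8.3 - 0.5 * Real.sqrt 2), ?_⟩
  intro p hp
  simp only [Set.mem_insert_iff, Set.mem_singleton_iff] at hp
  rcases hp with rfl | rfl | rfl
  · exact ⟨1, by simp [Prod.ext_iff]; constructor <;> ring⟩
  · exact ⟨0, by simp⟩
  · refine ⟨(15943200 * Real.sqrt 2 - 41081480) / 208183298, ?_⟩
    simp only [Prod.ext_iff, vadd_eq_add, Prod.smul_fst, Prod.smul_snd, Prod.fst_add, Prod.snd_add,
      smul_eq_mul]
    constructor
    · field_simp
      linear_combination (11366808070800 : ℝ) * hs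
    · field_simp
      linear_combination (11366808070800 : ℝ) * hs
end
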